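/- (Accelerated gradient and skew-symmetric splitting method.) Let F : ℝ^n → ℝ be differentiable with F ∈ S_{μ, L_F}, μ > 0, let N be a real n×n skew-symmetric matrix and B a real n×n matrix with N = B^sym − 2B, B^sym = B + Bᵀ, L_{B^sym} = ‖B^sym‖, and let x* satisfy ∇F(x*) + N x* = 0. Suppose 0 < α ≤ min{μ/(2L_{B^sym}), √(μ/(2L_F))} and the sequences satisfy (x̂_{k+1} − x_k)/α = y_k − x̂_{k+1}, (y_{k+1} − y_k)/α = x̂_{k+1} − y_{k+1} − (1/μ)(∇F(x̂_{k+1}) + B^sym y_k − 2B y_{k+1}), and (x_{k+1} − x_k)/α = y_{k+1} − (1/2)(x_{k+1} + x̂_{k+1}). Then, with E^{αB}(x,y) = D_F(x,x*) + (1/2)‖y − x*‖²_{μI − αB^sym} and E^{αB}_k = E^{αB}(x_k, y_k), one has E^{αB}_{k+1} ≤ (1 + α/2)^{−1} E^{αB}_k for every k, and ‖x_k − x*‖² ≤ (2/μ)(1 + α/2)^{−k} E^{αB}_0. -/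

import Mathlib

open Matrix

/-- The spectral norm (ℓ²-operator norm) of a real square matrix. -/
noncomputable def specNorm {n : ℕ} (M : Matrix (Fin n) (Fin n) ℝ) : ℝ :=
  ‖Matrix.toEuclideanCLM (𝕜 := ℝ) M‖

/-- The continuous linear functional `v ↦ ⟨z, v⟩` on `ℝⁿ`. -/
noncomputable def dpCLM {m : ℕ} (z : Fin m → ℝ) : (Fin m → ℝ) →L[ℝ] ℝ :=
  LinearMap.toContinuousLinearMap
    { toFun := fun v => z ⬝ᵥ v
      map_add' := fun a b => by simp [dotProduct_add]
      map_smul' := fun c a => by simp [dotProduct_smul] }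


/-!
The energy `E(x, y) = D_F(x, x*) + ½‖y - x*‖²_M`, `M = μI - αBˢʸᵐ`, is a Lyapunov function.
In error coordinates the `y`-update reads
`M (y_{k+1} - y_k) = αμ (x̂ - y_{k+1}) - α (∇F x̂ - ∇F x*) - α N (y_{k+1} - x*)`:
the skew term vanishes against `y_{k+1} - x*`, and the gradient term cancels the one produced
by the three-point identity of the Bregman divergence. What is left of `(1 + α/2) E_{k+1} - E_k`
is nonpositive by strong convexity at `x̂`, by `L_F`-smoothness on the extrapolation
`x_{k+1} - x̂ = α (y_{k+1} - y_k) / (1 + α/2)`, and because the step bounds `α‖Bˢʸᵐ‖ ≤ μ/2`,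
`L_F α² ≤ μ/2` squeeze `‖z‖²_M` between `μ/2 ‖z‖²` and `3μ/2 ‖z‖²`.
-/

section Bregman

variable {ι : Type*} [Fintype ι]

lemma dotProduct_self_nonneg (v : ι → ℝ) : 0 ≤ v ⬝ᵥ v :=
  Finset.sum_nonneg fun i _ => mul_self_nonneg (v i)

lemma two_mul_dotProduct_sub_le (u v : ι → ℝ) : 2 * (v ⬝ᵥ (u - v)) ≤ u ⬝ᵥ u - v ⬝ᵥ v := by
  have := dotProduct_self_nonneg (u - v)
  simp only [dotProduct_sub, sub_dotProduct, dotProduct_comm u v] at this ⊢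
  linarith

lemma dotProduct_mulVec_self_eq_zero_of_transpose_eq_neg {N : Matrix ι ι ℝ} (hN : Nᵀ = -N)
    (v : ι → ℝ) : v ⬝ᵥ N *ᵥ v = 0 := by
  have h : v ⬝ᵥ N *ᵥ v = -(v ⬝ᵥ N *ᵥ v) := by
    conv_lhs => rw [dotProduct_mulVec, ← mulVec_transpose, hN, neg_mulVec, neg_dotProduct,
      dotProduct_comm]
  linarith

lemma Matrix.IsSymm.dotProduct_mulVec_self_sub_self {M : Matrix ι ι ℝ} (hM : M.IsSymm)
    (v w : ι → ℝ) :
    v ⬝ᵥ M *ᵥ v - w ⬝ᵥ M *ᵥ w = 2 * (v ⬝ᵥ M *ᵥ (v - w)) - (v - w) ⬝ᵥ M *ᵥ (v - w) := by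
  have hwv : w ⬝ᵥ M *ᵥ v = v ⬝ᵥ M *ᵥ w := by
    rw [dotProduct_mulVec, ← mulVec_transpose, hM.eq, dotProduct_comm]
  simp only [mulVec_sub, dotProduct_sub, sub_dotProduct, hwv]
  ring

variable (F : (ι → ℝ) → ℝ) (g : (ι → ℝ) → ι → ℝ)

def bregman (x y : ι → ℝ) : ℝ :=
  F x - F y - g y ⬝ᵥ (x - y)

noncomputable def agssEnergy (M : Matrix ι ι ℝ) (xs x y : ι → ℝ) : ℝ :=
  bregman F g x xs + 1 / 2 * ((y - xs) ⬝ᵥ M *ᵥ (y - xs))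

lemma mul_bregman_sub_bregman_eq {a b : ℝ} {x xp xh xs z : ι → ℝ}
    (h : a • (xp - xh) - (x - xh) = b • (z - xh)) :
    a * bregman F g xp xs - bregman F g x xs
      = a * bregman F g xp xh - bregman F g x xh + (a - 1 - b) * bregman F g xh xs
        - b * bregman F g xs xh + b * ((g xh - g xs) ⬝ᵥ (z - xs)) := by
  have hG := congrArg ((g xh - g xs) ⬝ᵥ ·) h
  simp only [bregman, dotProduct_sub, sub_dotProduct, dotProduct_smul, smul_eq_mul] at hG ⊢
  linear_combination hG

end Bregman

lemma abs_dotProduct_mulVec_le_specNorm {n : ℕ} (M : Matrix (Fin n) (Fin n) ℝ)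
    (v : Fin n → ℝ) : |v ⬝ᵥ M *ᵥ v| ≤ specNorm M * (v ⬝ᵥ v) := by
  set e : EuclideanSpace ℝ (Fin n) := WithLp.toLp 2 v
  have he : v ⬝ᵥ v = ‖e‖ ^ 2 := by
    rw [← real_inner_self_eq_norm_sq, EuclideanSpace.inner_eq_star_dotProduct]; rfl
  have hM : v ⬝ᵥ M *ᵥ v = inner ℝ e (Matrix.toEuclideanCLM (𝕜 := ℝ) M e) := by
    rw [EuclideanSpace.inner_eq_star_dotProduct, dotProduct_comm]; rfl
  rw [hM, he]
  calc |inner ℝ e (Matrix.toEuclideanCLM (𝕜 := ℝ) M e)|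
      ≤ ‖e‖ * ‖Matrix.toEuclideanCLM (𝕜 := ℝ) M e‖ := abs_real_inner_le_norm _ _
    _ ≤ ‖e‖ * (specNorm M * ‖e‖) := by gcongr; exact (Matrix.toEuclideanCLM (𝕜 := ℝ) M).le_opNorm e
    _ = specNorm M * ‖e‖ ^ 2 := by ring

lemma abs_dotProduct_smul_one_sub_mulVec_sub_le {n : ℕ} {S : Matrix (Fin n) (Fin n) ℝ}
    {μ α : ℝ} (hα : 0 ≤ α) (hS : α * specNorm S ≤ μ / 2) (z : Fin n → ℝ) :
    |z ⬝ᵥ (μ • 1 - α • S) *ᵥ z - μ * (z ⬝ᵥ z)| ≤ μ / 2 * (z ⬝ᵥ z) := by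
  have hz : z ⬝ᵥ (μ • 1 - α • S) *ᵥ z - μ * (z ⬝ᵥ z) = -(α * (z ⬝ᵥ S *ᵥ z)) := by
    simp only [sub_mulVec, smul_mulVec, one_mulVec, dotProduct_sub, dotProduct_smul, smul_eq_mul]
    ring
  rw [hz, abs_neg, abs_mul, abs_of_nonneg hα]
  calc α * |z ⬝ᵥ S *ᵥ z| ≤ α * (specNorm S * (z ⬝ᵥ z)) := by
        gcongr; exact abs_dotProduct_mulVec_le_specNorm S z
    _ ≤ μ / 2 * (z ⬝ᵥ z) := by
        rw [← mul_assoc]; exact mul_le_mul_of_nonneg_right hS (dotProduct_self_nonneg z)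

lemma mul_le_half_of_le_div_two_mul {a b c : ℝ} (hb : 0 ≤ b) (hc : 0 ≤ c)
    (h : a ≤ c / (2 * b)) : a * b ≤ c / 2 := by
  rcases hb.eq_or_lt with rfl | hb
  · rw [mul_zero]; positivity
  · rw [le_div_iff₀ (by positivity)] at h; linarith

lemma mul_sq_le_half_of_le_sqrt_div_two_mul {a b c : ℝ} (ha : 0 ≤ a) (hc : 0 ≤ c)
    (h : a ≤ √(c / (2 * b))) : b * a ^ 2 ≤ c / 2 := by
  rcases le_or_gt b 0 with hb | hb
  · nlinarith [sq_nonneg a]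
  · rw [Real.le_sqrt ha (by positivity), le_div_iff₀ (by positivity)] at h; linarith

section AGSS

variable {ι : Type*} [Fintype ι] [DecidableEq ι] (F : (ι → ℝ) → ℝ) (g : (ι → ℝ) → ι → ℝ)
  {μ α : ℝ} {B N M : Matrix ι ι ℝ} {xs x y xh xp yp : ι → ℝ}

lemma agss_y_step_error_form (hμ : μ ≠ 0) (hNB : N = (B + Bᵀ) - (2 : ℝ) • B)
    (hxs : g xs + N *ᵥ xs = 0)
    (h2 : yp - y = α • (xh - yp - (1 / μ) • (g xh + (B + Bᵀ) *ᵥ y - (2 : ℝ) • B *ᵥ yp))) :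
    (μ • 1 - α • (B + Bᵀ)) *ᵥ (yp - y)
      = (α * μ) • (xh - yp) - α • (g xh - g xs) - α • N *ᵥ (yp - xs) := by
  subst hNB
  simp only [sub_mulVec, smul_mulVec, one_mulVec, mulVec_sub] at hxs ⊢
  linear_combination (norm := skip) μ • h2 - α • hxs
  match_scalars <;> field_simp <;> ring

lemma agss_energy_identity (hμ : μ ≠ 0) (hskew : Nᵀ = -N) (hNB : N = (B + Bᵀ) - (2 : ℝ) • B)
    (hxs : g xs + N *ᵥ xs = 0)
    (h2 : yp - y = α • (xh - yp - (1 / μ) • (g xh + (B + Bᵀ) *ᵥ y - (2 : ℝ) • B *ᵥ yp)))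
    (h3 : xp - x = α • (yp - (1 / 2 : ℝ) • (xp + xh))) (hM : M = μ • 1 - α • (B + Bᵀ)) :
    (1 + α / 2) * agssEnergy F g M xs xp yp - agssEnergy F g M xs x y
      = (1 + α / 2) * bregman F g xp xh - bregman F g x xh - α / 2 * bregman F g xh xs
        - α * bregman F g xs xh + α * μ * ((yp - xs) ⬝ᵥ (xh - yp))
        - 1 / 2 * ((yp - y) ⬝ᵥ M *ᵥ (yp - y)) + α / 4 * ((yp - xs) ⬝ᵥ M *ᵥ (yp - xs)) := by
  have hMsymm : M.IsSymm :=
    hM ▸ (isSymm_one.smul μ).sub ((isSymm_add_transpose_self B).smul α)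
  have hx : (1 + α / 2) • (xp - xh) - (x - xh) = α • (yp - xh) := by
    linear_combination (norm := module) h3
  have hF := mul_bregman_sub_bregman_eq F g (xs := xs) hx
  have hQ := hMsymm.dotProduct_mulVec_self_sub_self (yp - xs) (y - xs)
  rw [sub_sub_sub_cancel_right] at hQ
  have hcross : (yp - xs) ⬝ᵥ M *ᵥ (yp - y)
      = α * μ * ((yp - xs) ⬝ᵥ (xh - yp)) - α * ((g xh - g xs) ⬝ᵥ (yp - xs)) := by
    rw [hM, agss_y_step_error_form g hμ hNB hxs h2, dotProduct_sub, dotProduct_sub,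
      dotProduct_smul, dotProduct_smul, dotProduct_smul,
      dotProduct_mulVec_self_eq_zero_of_transpose_eq_neg hskew, dotProduct_comm (yp - xs) (g xh - g xs)]
    simp only [smul_eq_mul]; ring
  simp only [agssEnergy]
  linear_combination hF + (1 / 2 : ℝ) * hQ + hcross

lemma agss_energy_contraction {LF : ℝ} (hμ : 0 < μ) (hα : 0 ≤ α)
    (hlower : ∀ u w, μ / 2 * ((u - w) ⬝ᵥ (u - w)) ≤ bregman F g u w)
    (hupper : ∀ u w, bregman F g u w ≤ LF / 2 * ((u - w) ⬝ᵥ (u - w)))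
    (hαL : LF * α ^ 2 ≤ μ / 2) (hskew : Nᵀ = -N) (hNB : N = (B + Bᵀ) - (2 : ℝ) • B)
    (hxs : g xs + N *ᵥ xs = 0) (hM : M = μ • 1 - α • (B + Bᵀ))
    (hMbound : ∀ z, |z ⬝ᵥ M *ᵥ z - μ * (z ⬝ᵥ z)| ≤ μ / 2 * (z ⬝ᵥ z))
    (h1 : xh - x = α • (y - xh))
    (h2 : yp - y = α • (xh - yp - (1 / μ) • (g xh + (B + Bᵀ) *ᵥ y - (2 : ℝ) • B *ᵥ yp)))
    (h3 : xp - x = α • (yp - (1 / 2 : ℝ) • (xp + xh))) :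
    (1 + α / 2) * agssEnergy F g M xs xp yp ≤ agssEnergy F g M xs x y := by
  have hE := agss_energy_identity F g hμ.ne' hskew hNB hxs h2 h3 hM
  have hD : ∀ u w, 0 ≤ bregman F g u w := fun u w =>
    (mul_nonneg (by positivity) (dotProduct_self_nonneg _)).trans (hlower u w)
  have hxp : (1 + α / 2) * bregman F g xp xh ≤ μ / 4 * ((yp - y) ⬝ᵥ (yp - y)) := by
    have hK : (1 + α / 2) • (xp - xh) = α • (yp - y) := by
      linear_combination (norm := module) h3 - h1
    have hK2 := congrArg (fun z => z ⬝ᵥ z) hK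
    simp only [smul_dotProduct, dotProduct_smul, smul_eq_mul] at hK2
    have hd := dotProduct_self_nonneg (yp - y)
    calc (1 + α / 2) * bregman F g xp xh ≤ (1 + α / 2) ^ 2 * bregman F g xp xh := by
          gcongr
          · exact hD _ _
          · nlinarith
      _ ≤ (1 + α / 2) ^ 2 * (LF / 2 * ((xp - xh) ⬝ᵥ (xp - xh))) := by gcongr; exact hupper _ _
      _ = LF * α ^ 2 / 2 * ((yp - y) ⬝ᵥ (yp - y)) := by linear_combination LF / 2 * hK2
      _ ≤ μ / 4 * ((yp - y) ⬝ᵥ (yp - y)) := by nlinarith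
  obtain ⟨hMd, -⟩ := abs_le.mp (hMbound (yp - y))
  obtain ⟨-, hMv⟩ := abs_le.mp (hMbound (yp - xs))
  have hsw : μ / 2 * ((xh - xs) ⬝ᵥ (xh - xs)) ≤ bregman F g xs xh := by
    simpa only [← neg_sub xh xs, neg_dotProduct_neg] using hlower xs xh
  have hcs := two_mul_dotProduct_sub_le (xh - xs) (yp - xs)
  rw [sub_sub_sub_cancel_right] at hcs
  have hv0 := dotProduct_self_nonneg (yp - xs)
  linarith [hD x xh, mul_nonneg hα (hD xh xs), mul_le_mul_of_nonneg_left hsw hα,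
    mul_le_mul_of_nonneg_left hcs (mul_nonneg hα hμ.le), mul_le_mul_of_nonneg_left hMv hα,
    mul_nonneg (mul_nonneg hα hμ.le) hv0]

end AGSS

theorem agss_linear_convergence_general
    {n : ℕ} (μ LF α : ℝ) (hμ : 0 < μ)
    (F : (Fin n → ℝ) → ℝ) (gradF : (Fin n → ℝ) → (Fin n → ℝ))
    (hlower : ∀ x y : Fin n → ℝ,
      μ / 2 * ((x - y) ⬝ᵥ (x - y)) ≤ F x - F y - gradF y ⬝ᵥ (x - y))
    (hupper : ∀ x y : Fin n → ℝ,
      F x - F y - gradF y ⬝ᵥ (x - y) ≤ LF / 2 * ((x - y) ⬝ᵥ (x - y)))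
    (N B : Matrix (Fin n) (Fin n) ℝ)
    (hskew : Nᵀ = -N)
    (hNB : N = (B + Bᵀ) - (2 : ℝ) • B)
    (xs : Fin n → ℝ) (hxs : gradF xs + N.mulVec xs = 0)
    (hα0 : 0 < α)
    (hα1 : α ≤ min (μ / (2 * specNorm (B + Bᵀ))) (Real.sqrt (μ / (2 * LF))))
    (x y xhat : ℕ → (Fin n → ℝ))
    (hstep1 : ∀ k, xhat (k + 1) - x k = α • (y k - xhat (k + 1)))
    (hstep2 : ∀ k, y (k + 1) - y k =
      α • (xhat (k + 1) - y (k + 1)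
        - (1 / μ) • (gradF (xhat (k + 1)) + (B + Bᵀ).mulVec (y k)
          - (2 : ℝ) • B.mulVec (y (k + 1)))))
    (hstep3 : ∀ k, x (k + 1) - x k =
      α • (y (k + 1) - (1 / 2 : ℝ) • (x (k + 1) + xhat (k + 1)))) :
    (∀ k,
      (F (x (k + 1)) - F xs - gradF xs ⬝ᵥ (x (k + 1) - xs))
          + (1 / 2) * ((y (k + 1) - xs) ⬝ᵥ
              ((μ • 1 - α • (B + Bᵀ)).mulVec (y (k + 1) - xs)))
        ≤ (1 + α / 2)⁻¹ *
          ((F (x k) - F xs - gradF xs ⬝ᵥ (x k - xs))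
            + (1 / 2) * ((y k - xs) ⬝ᵥ
                ((μ • 1 - α • (B + Bᵀ)).mulVec (y k - xs))))) ∧
    (∀ k,
      (x k - xs) ⬝ᵥ (x k - xs)
        ≤ (2 / μ) * ((1 + α / 2)⁻¹) ^ k *
          ((F (x 0) - F xs - gradF xs ⬝ᵥ (x 0 - xs))
            + (1 / 2) * ((y 0 - xs) ⬝ᵥ
                ((μ • 1 - α • (B + Bᵀ)).mulVec (y 0 - xs))))) := by
  obtain ⟨hαB, hαL⟩ := le_min_iff.mp hα1
  have hQ := abs_dotProduct_smul_one_sub_mulVec_sub_le hα0.le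
    (mul_le_half_of_le_div_two_mul (norm_nonneg _) hμ.le hαB)
  let E k := agssEnergy F gradF (μ • 1 - α • (B + Bᵀ)) xs (x k) (y k)
  have hdecay : ∀ k, E (k + 1) ≤ (1 + α / 2)⁻¹ * E k := fun k => by
    rw [← div_eq_inv_mul, le_div_iff₀' (by positivity)]
    exact agss_energy_contraction F gradF hμ hα0.le hlower hupper
      (mul_sq_le_half_of_le_sqrt_div_two_mul hα0.le hμ.le hαL) hskew hNB hxs rfl hQ
      (hstep1 k) (hstep2 k) (hstep3 k)
  refine ⟨hdecay, fun k => ?_⟩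
  have hEk : μ / 2 * ((x k - xs) ⬝ᵥ (x k - xs)) ≤ E k := by
    have hx : μ / 2 * ((x k - xs) ⬝ᵥ (x k - xs)) ≤ bregman F gradF (x k) xs := hlower (x k) xs
    have hy := (abs_le.mp (hQ (y k - xs))).1
    have := mul_nonneg hμ.le (dotProduct_self_nonneg (y k - xs))
    simp only [E, agssEnergy]
    linarith
  calc (x k - xs) ⬝ᵥ (x k - xs) ≤ 2 / μ * E k := by
        rw [div_mul_eq_mul_div, le_div_iff₀ hμ]; linarith
    _ ≤ 2 / μ * ((1 + α / 2)⁻¹ ^ k * E 0) := by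
        gcongr; exact le_geom (by positivity) k fun j _ => hdecay j
    _ = 2 / μ * (1 + α / 2)⁻¹ ^ k * E 0 := by ring

/-- **Accelerated linear convergence of the explicit AGSS method.**
For `F ∈ S_{μ,L_F}` (`μ > 0`), `N = Bˢʸᵐ - 2B` skew-symmetric with `Bˢʸᵐ = B + Bᵀ`,
`∇F(x*) + Nx* = 0`, step `0 < α ≤ min{μ/(2‖Bˢʸᵐ‖), √(μ/(2L_F))}`, and the AGSS
iteration, the modified Lyapunov function
`E(x,y) = D_F(x,x*) + ½‖y - x*‖²_{μI - αBˢʸᵐ}` satisfies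
`E_{k+1} ≤ (1 + α/2)⁻¹E_k` and `‖x_k - x*‖² ≤ (2/μ)(1 + α/2)⁻ᵏ E_0`. -/
theorem agss_linear_convergence
    {n : ℕ} (μ LF α : ℝ) (hμ : 0 < μ)
    (F : (Fin n → ℝ) → ℝ) (gradF : (Fin n → ℝ) → (Fin n → ℝ))
    (hdiff : ∀ x, HasFDerivAt F (dpCLM (gradF x)) x)
    (hlower : ∀ x y : Fin n → ℝ,
      μ / 2 * ((x - y) ⬝ᵥ (x - y)) ≤ F x - F y - gradF y ⬝ᵥ (x - y))
    (hupper : ∀ x y : Fin n → ℝ,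
      F x - F y - gradF y ⬝ᵥ (x - y) ≤ LF / 2 * ((x - y) ⬝ᵥ (x - y)))
    (N B : Matrix (Fin n) (Fin n) ℝ)
    (hskew : Nᵀ = -N)
    (hNB : N = (B + Bᵀ) - (2 : ℝ) • B)
    (xs : Fin n → ℝ) (hxs : gradF xs + N.mulVec xs = 0)
    (hα0 : 0 < α)
    (hα1 : α ≤ min (μ / (2 * specNorm (B + Bᵀ))) (Real.sqrt (μ / (2 * LF))))
    (x y xhat : ℕ → (Fin n → ℝ))
    (hstep1 : ∀ k, xhat (k + 1) - x k = α • (y k - xhat (k + 1)))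
    (hstep2 : ∀ k, y (k + 1) - y k =
      α • (xhat (k + 1) - y (k + 1)
        - (1 / μ) • (gradF (xhat (k + 1)) + (B + Bᵀ).mulVec (y k)
          - (2 : ℝ) • B.mulVec (y (k + 1)))))
    (hstep3 : ∀ k, x (k + 1) - x k =
      α • (y (k + 1) - (1 / 2 : ℝ) • (x (k + 1) + xhat (k + 1)))) :
    (∀ k,
      (F (x (k + 1)) - F xs - gradF xs ⬝ᵥ (x (k + 1) - xs))
          + (1 / 2) * ((y (k + 1) - xs) ⬝ᵥ
              ((μ • 1 - α • (B + Bᵀ)).mulVec (y (k + 1) - xs)))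
        ≤ (1 + α / 2)⁻¹ *
          ((F (x k) - F xs - gradF xs ⬝ᵥ (x k - xs))
            + (1 / 2) * ((y k - xs) ⬝ᵥ
                ((μ • 1 - α • (B + Bᵀ)).mulVec (y k - xs))))) ∧
    (∀ k,
      (x k - xs) ⬝ᵥ (x k - xs)
        ≤ (2 / μ) * ((1 + α / 2)⁻¹) ^ k *
          ((F (x 0) - F xs - gradF xs ⬝ᵥ (x 0 - xs))
            + (1 / 2) * ((y 0 - xs) ⬝ᵥ
                ((μ • 1 - α • (B + Bᵀ)).mulVec (y 0 - xs))))) :=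
  agss_linear_convergence_general μ LF α hμ F gradF hlower hupper N B hskew hNB xs hxs hα0 hα1 x y
    xhat hstep1 hstep2 hstep3
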